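/- arXiv:2003.05213 — 4 statements merged into one kernel-verified Lean document; each statement's English description precedes it below -/
import Mathlib

section
/- Soundness of the skew monoidal sequent calculus: for every derivation f of a sequent S ∣ Γ ⟶ C in the skew monoidal sequent calculus, there is a derivation sound f : ⟦S ∣ Γ⟧ ⟶ C in the categorical calculus. In particular, for every derivation of A ∣ – ⟶ C there is a map A ⟶ C in the free skew monoidal category Fsk(Var). -/
set_option linter.unusedVariables false
inductive Fma (V : Type) : Type
  | var : V → Fma V
  | unit : Fma V
  | tens : Fma V → Fma V → Fma V

abbrev Stp (V : Type) := Option (Fma V)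

def stpF {V : Type} : Stp V → Fma V
  | none => Fma.unit
  | some A => A

def semF {V : Type} : Fma V → List (Fma V) → Fma V
  | A, [] => A
  | A, B :: Γ => semF (A.tens B) Γ

abbrev sem {V : Type} (S : Stp V) (Γ : List (Fma V)) : Fma V := semF (stpF S) Γ

theorem semF_append {V : Type} (A : Fma V) (Γ Δ : List (Fma V)) :
    semF A (Γ ++ Δ) = semF (semF A Γ) Δ := by
  induction Γ generalizing A with
  | nil => rfl
  | cons B Γ ih => exact ih _

/-- The categorical calculus: derivations A ⟶ C of the free skew monoidal category. -/
inductive Der {V : Type} : Fma V → Fma V → Type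
  | id : Der A A
  | comp : Der B C → Der A B → Der A C
  | tens : Der A C → Der B D → Der (Fma.tens A B) (Fma.tens C D)
  | lam : Der (Fma.tens Fma.unit A) A
  | rho : Der A (Fma.tens A Fma.unit)
  | alpha : Der (Fma.tens (Fma.tens A B) C) (Fma.tens A (Fma.tens B C))

/-- The skew monoidal sequent calculus (with the two cut rules). -/
inductive SeqD {V : Type} : Stp V → List (Fma V) → Fma V → Type
  | ax : SeqD (some A) [] A
  | uf : SeqD (some A) Γ C → SeqD none (A :: Γ) C
  | Il : SeqD none Γ C → SeqD (some Fma.unit) Γ C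
  | Ir : SeqD none [] Fma.unit
  | tl : SeqD (some A) (B :: Γ) C → SeqD (some (Fma.tens A B)) Γ C
  | tr : SeqD S Γ A → SeqD none Δ B → SeqD S (Γ ++ Δ) (Fma.tens A B)
  | scut : SeqD S Γ A → SeqD (some A) Δ C → SeqD S (Γ ++ Δ) C
  | ccut : SeqD none Γ A → SeqD S (Δ₀ ++ A :: Δ₁) C → SeqD S ((Δ₀ ++ Γ) ++ Δ₁) C

/-!
The interpretation `⟦S ∣ Γ⟧` makes `IL` and `⊗L` identities (`⟦I ∣ Γ⟧ = ⟦– ∣ Γ⟧` and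
`⟦A ⊗ B ∣ Γ⟧ = ⟦A ∣ B, Γ⟧` hold by definition); `uf` is `λ` and `scut` is composition, each
after applying the functor `semF · Δ` (iterated `– ⊗ B`). The one nontrivial ingredient is a map
`⟦X ∣ Δ⟧ ⟶ X ⊗ ⟦– ∣ Δ⟧`, namely `ρ` followed by repeated `α`: it interprets `⊗R` and, under
`semF · Δ₁`, `ccut`.
-/

namespace Der

variable {V : Type}

def mapSemF {A B : Fma V} (f : Der A B) : ∀ Γ, Der (semF A Γ) (semF B Γ)
  | [] => f
  | _ :: Γ => mapSemF (tens f id) Γ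

def assocSemF (X Y : Fma V) : ∀ Δ, Der (semF (Fma.tens X Y) Δ) (Fma.tens X (semF Y Δ))
  | [] => id
  | B :: Δ => comp (assocSemF X (Fma.tens Y B) Δ) (mapSemF alpha Δ)

def splitSemF (X : Fma V) (Δ : List (Fma V)) : Der (semF X Δ) (Fma.tens X (sem none Δ)) :=
  comp (assocSemF X Fma.unit Δ) (mapSemF rho Δ)

end Der

theorem sem_append {V : Type} (S : Stp V) (Γ Δ : List (Fma V)) :
    sem S (Γ ++ Δ) = semF (sem S Γ) Δ :=
  semF_append _ _ _

open Der in
def SeqD.sound {V : Type} : {S : Stp V} → {Γ : List (Fma V)} → {C : Fma V} →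
    SeqD S Γ C → Der (sem S Γ) C
  | _, _, _, ax => id
  | _, _, _, uf f => comp f.sound (mapSemF lam _)
  | _, _, _, Il f => f.sound
  | _, _, _, Ir => id
  | _, _, _, tl f => f.sound
  | S, _, _, @tr _ _ Γ A Δ _ f g =>
      sem_append S Γ Δ ▸ comp (comp (tens id g.sound) (splitSemF A Δ)) (mapSemF f.sound Δ)
  | S, _, _, @scut _ _ Γ _ Δ _ f g =>
      sem_append S Γ Δ ▸ comp g.sound (mapSemF f.sound Δ)
  | S, _, _, @ccut _ Γ A _ Δ₀ Δ₁ C f g => by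
      rw [sem_append, sem_append]
      have gHead : Der (semF (Fma.tens (sem S Δ₀) A) Δ₁) C := sem_append S Δ₀ (A :: Δ₁) ▸ g.sound
      exact comp gHead (mapSemF (comp (tens id f.sound) (splitSemF _ Γ)) Δ₁)

/-- Soundness of the skew monoidal sequent calculus: every derivation of `S ∣ Γ ⟶ C`
yields a categorical derivation `⟦S ∣ Γ⟧ ⟶ C`; in particular every derivation of
`A ∣ – ⟶ C` yields a map `A ⟶ C` in the free skew monoidal category. -/
theorem statement0 (V : Type) :
    (∀ (S : Stp V) (Γ : List (Fma V)) (C : Fma V),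
      SeqD S Γ C → Nonempty (Der (sem S Γ) C)) ∧
    (∀ (A C : Fma V), SeqD (some A) [] C → Nonempty (Der A C)) :=
  ⟨fun _ _ _ f => ⟨f.sound⟩, fun _ _ f => ⟨f.sound⟩⟩
end

section
/- Completeness of the skew monoidal sequent calculus: for every derivation f : A ⟶ C in the categorical calculus, there is a derivation cmplt f of the sequent A ∣ – ⟶ C in the skew monoidal sequent calculus. -/
set_option linter.unusedVariables false
def Der.cmplt {V : Type} : {A C : Fma V} → Der A C → SeqD (some A) [] C
  | _, _, .id => .ax
  | _, _, .comp g f => .scut f.cmplt g.cmplt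
  | _, _, .tens f g => .tl (.tr f.cmplt (.uf g.cmplt))
  | _, _, .lam => .tl (.Il (.uf .ax))
  | _, _, .rho => .tr .ax .Ir
  | _, _, .alpha => .tl (.tl (.tr .ax (.uf (.tr .ax (.uf .ax)))))

/-- Completeness of the skew monoidal sequent calculus: every categorical derivation
`f : A ⟶ C` yields a derivation of the sequent `A ∣ – ⟶ C`. -/
theorem statement1 (V : Type) (A C : Fma V) (f : Der A C) :
    Nonempty (SeqD (some A) [] C) :=
  ⟨f.cmplt⟩
end

section
/- For any stoup S and contexts Γ, Δ, there is a derivation φ_{S,Γ,Δ} : ⟦S ∣ Γ, Δ⟧ ⟶ ⟦S ∣ Γ⟧ ⊗ ⟦– ∣ Δ⟧ in the categorical calculus. -/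
set_option linter.unusedVariables false
namespace Der

variable {V : Type}

def semFMap {A B : Fma V} (f : Der A B) : (Δ : List (Fma V)) → Der (semF A Δ) (semF B Δ)
  | [] => f
  | _ :: Δ => semFMap (tens f id) Δ

def semFTensAssoc (A : Fma V) : (C : Fma V) → (Δ : List (Fma V)) →
    Der (semF (A.tens C) Δ) (A.tens (semF C Δ))
  | _, [] => id
  | C, B :: Δ => comp (semFTensAssoc A (C.tens B) Δ) (semFMap alpha Δ)

def semFSplit (A : Fma V) (Δ : List (Fma V)) : Der (semF A Δ) (A.tens (semF Fma.unit Δ)) :=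
  comp (semFTensAssoc A Fma.unit Δ) (semFMap rho Δ)

end Der

/-- There is a derivation `φ_{S,Γ,Δ} : ⟦S ∣ Γ, Δ⟧ ⟶ ⟦S ∣ Γ⟧ ⊗ ⟦– ∣ Δ⟧`. -/
theorem statement5 (V : Type) (S : Stp V) (Γ Δ : List (Fma V)) :
    Nonempty (Der (sem S (Γ ++ Δ)) (Fma.tens (sem S Γ) (sem none Δ))) := by
  rw [sem, semF_append]
  exact ⟨Der.semFSplit _ _⟩
end

section
/- Invertibility of IL and ⊗L: the rules IL⁻¹ (from a cut-free derivation of I ∣ Γ ⟶ C obtain a cut-free derivation of – ∣ Γ ⟶ C) and ⊗L⁻¹ (from a cut-free derivation of A ⊗ B ∣ Γ ⟶ C obtain a cut-free derivation of A ∣ B, Γ ⟶ C) are admissible; moreover they are compatible with ◦≐ and inverse to IL and ⊗L in the sense that IL⁻¹(IL f) = f, IL(IL⁻¹ f) ◦≐ f, ⊗L⁻¹(⊗L f) = f, and ⊗L(⊗L⁻¹ f) ◦≐ f for all derivations f of the appropriate type. -/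
set_option linter.unusedVariables false
/-- The cut-free skew monoidal sequent calculus. -/
inductive CF {V : Type} : Stp V → List (Fma V) → Fma V → Type
  | ax : CF (some A) [] A
  | uf : CF (some A) Γ C → CF none (A :: Γ) C
  | Il : CF none Γ C → CF (some Fma.unit) Γ C
  | Ir : CF none [] Fma.unit
  | tl : CF (some A) (B :: Γ) C → CF (some (Fma.tens A B)) Γ C
  | tr : CF S Γ A → CF none Δ B → CF S (Γ ++ Δ) (Fma.tens A B)

inductive CFEq {V : Type} : {S : Stp V} → {Γ : List (Fma V)} → {C : Fma V} → CF S Γ C → CF S Γ C → Prop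
  | refl : CFEq f f
  | symm : CFEq f g → CFEq g f
  | trans : CFEq f g → CFEq g h → CFEq f h
  | ufCong : CFEq f g → CFEq (CF.uf f) (CF.uf g)
  | IlCong : CFEq f g → CFEq (CF.Il f) (CF.Il g)
  | tlCong : CFEq f g → CFEq (CF.tl f) (CF.tl g)
  | trCong : CFEq f f' → CFEq g g' → CFEq (CF.tr f g) (CF.tr f' g')
  | axI : CFEq (CF.ax (A := Fma.unit (V := V))) (CF.Il CF.Ir)
  | axTens : CFEq (CF.ax (A := Fma.tens A B)) (CF.tl (CF.tr CF.ax (CF.uf CF.ax)))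
  | trUf : CFEq (CF.tr (CF.uf f) g) (CF.uf (CF.tr f g))
  | trIl : CFEq (CF.tr (CF.Il f) g) (CF.Il (CF.tr f g))
  | trTl : CFEq (CF.tr (CF.tl f) g) (CF.tl (CF.tr f g))

def ILinv {V : Type} {Γ : List (Fma V)} {C : Fma V} : CF (some Fma.unit) Γ C → CF none Γ C
  | .ax => .Ir
  | .Il f => f
  | .tr f g => .tr (ILinv f) g

def tensLinv {V : Type} {Γ : List (Fma V)} {A B C : Fma V} :
    CF (some (Fma.tens A B)) Γ C → CF (some A) (B :: Γ) C
  | .ax => .tr .ax (.uf .ax)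
  | .tl f => f
  | .tr f g => .tr (tensLinv f) g

/-! Both inverses push the left rule up through the left premise of `⊗R`, the only rule other
than `ax` and the rule itself that can conclude a sequent with that stoup. Compatibility with
`◦≐` holds because each generating equation with such a stoup becomes, after inversion,
an instance of reflexivity or of a congruence. -/

theorem ILinv_congr_of_eq {V : Type} {S : Stp V} {Γ : List (Fma V)} {C : Fma V}
    {f g : CF S Γ C} (e : CFEq f g) (h : S = some Fma.unit) :
    CFEq (ILinv (h ▸ f)) (ILinv (h ▸ g)) := by
  induction e with
  | refl => exact .refl
  | symm _ ih => exact .symm (ih h)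
  | trans _ _ ih₁ ih₂ => exact .trans (ih₁ h) (ih₂ h)
  | IlCong e => cases h; simpa only [ILinv] using e
  | trCong _ e₂ ih₁ => cases h; simpa only [ILinv] using .trCong (ih₁ rfl) e₂
  | axI | trIl => cases h; simpa only [ILinv] using .refl
  | _ => cases h

theorem ILinv_congr {V : Type} {Γ : List (Fma V)} {C : Fma V}
    {f g : CF (some Fma.unit) Γ C} (e : CFEq f g) : CFEq (ILinv f) (ILinv g) :=
  ILinv_congr_of_eq e rfl

theorem tensLinv_congr_of_eq {V : Type} {S : Stp V} {Γ : List (Fma V)} {C : Fma V}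
    {f g : CF S Γ C} (e : CFEq f g) {A B : Fma V} (h : S = some (Fma.tens A B)) :
    CFEq (tensLinv (h ▸ f)) (tensLinv (h ▸ g)) := by
  induction e with
  | refl => exact .refl
  | symm _ ih => exact .symm (ih h)
  | trans _ _ ih₁ ih₂ => exact .trans (ih₁ h) (ih₂ h)
  | tlCong e => cases h; simpa only [tensLinv] using e
  | trCong _ e₂ ih₁ => cases h; simpa only [tensLinv] using .trCong (ih₁ rfl) e₂
  | axTens | trTl => cases h; simpa only [tensLinv] using .refl
  | _ => cases h

theorem tensLinv_congr {V : Type} {Γ : List (Fma V)} {A B C : Fma V}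
    {f g : CF (some (Fma.tens A B)) Γ C} (e : CFEq f g) : CFEq (tensLinv f) (tensLinv g) :=
  tensLinv_congr_of_eq e rfl

theorem Il_ILinv {V : Type} : ∀ {Γ : List (Fma V)} {C : Fma V}
    (f : CF (some Fma.unit) Γ C), CFEq (CF.Il (ILinv f)) f
  | _, _, .ax => by simpa only [ILinv] using .symm .axI
  | _, _, .Il _ => by simpa only [ILinv] using .refl
  | _, _, .tr f _ => by simpa only [ILinv] using .trans (.symm .trIl) (.trCong (Il_ILinv f) .refl)

theorem tl_tensLinv {V : Type} : ∀ {Γ : List (Fma V)} {A B C : Fma V}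
    (f : CF (some (Fma.tens A B)) Γ C), CFEq (CF.tl (tensLinv f)) f
  | _, _, _, _, .ax => by simpa only [tensLinv] using .symm .axTens
  | _, _, _, _, .tl _ => by simpa only [tensLinv] using .refl
  | _, _, _, _, .tr f _ =>
    by simpa only [tensLinv] using .trans (.symm .trTl) (.trCong (tl_tensLinv f) .refl)

/-- Invertibility of `IL` and `⊗L`: the rules `IL⁻¹` and `⊗L⁻¹` are admissible
(witnessed by `ILinv` and `tensLinv`), compatible with `◦≐`, and inverse to `IL`
and `⊗L` respectively. -/
theorem statement10 (V : Type) :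
    (∀ (Γ : List (Fma V)) (C : Fma V) (f g : CF (some Fma.unit) Γ C),
      CFEq f g → CFEq (ILinv f) (ILinv g)) ∧
    (∀ (Γ : List (Fma V)) (A B C : Fma V) (f g : CF (some (Fma.tens A B)) Γ C),
      CFEq f g → CFEq (tensLinv f) (tensLinv g)) ∧
    (∀ (Γ : List (Fma V)) (C : Fma V) (f : CF none Γ C), ILinv (CF.Il f) = f) ∧
    (∀ (Γ : List (Fma V)) (C : Fma V) (f : CF (some Fma.unit) Γ C),
      CFEq (CF.Il (ILinv f)) f) ∧
    (∀ (Γ : List (Fma V)) (A B C : Fma V) (f : CF (some A) (B :: Γ) C),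
      tensLinv (CF.tl f) = f) ∧
    (∀ (Γ : List (Fma V)) (A B C : Fma V) (f : CF (some (Fma.tens A B)) Γ C),
      CFEq (CF.tl (tensLinv f)) f) :=
  ⟨fun _ _ _ _ => ILinv_congr, fun _ _ _ _ _ _ => tensLinv_congr, fun _ _ => ILinv.eq_2,
    fun _ _ => Il_ILinv, fun _ _ _ _ => tensLinv.eq_2, fun _ _ _ _ => tl_tensLinv⟩
end
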